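/- Let p > 3 be prime, a ∈ Z_p \ {0}, b, c ∈ Z_p. Then D_{(x|z)} |f_{a,0,0}⟩ = γ |f_{a,b,c}⟩ for some unit complex number γ, where x = -b·(3a)^{-1} and z = c - b²·(3a)^{-1} in Z_p; i.e., all magic states with the same cubic coefficient a are related by Weyl-Heisenberg (Pauli) operators up to a global phase. -/

import Mathlib

open Complex Matrix BigOperators Finset
open scoped Kronecker

noncomputable section

/-- Additive character `a ↦ exp(2πi a/p)` on `ZMod p`. -/
def chi (p : ℕ) (a : ZMod p) : ℂ := Complex.exp (2 * Real.pi * Complex.I * (a.val : ℂ) / p)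

/-- The shift operator `X : |j⟩ ↦ |j+1⟩`. -/
def Xop (p : ℕ) : Matrix (ZMod p) (ZMod p) ℂ := fun j k => if j = k + 1 then 1 else 0

/-- The clock operator `Z : |j⟩ ↦ ω^j |j⟩`. -/
def Zop (p : ℕ) : Matrix (ZMod p) (ZMod p) ℂ := Matrix.diagonal (fun j => chi p j)

/-- Weyl-Heisenberg displacement operator `D_(x|z) = ω^{2⁻¹ x z} X^x Z^z`. -/
def Dop (p : ℕ) [NeZero p] (x z : ZMod p) : Matrix (ZMod p) (ZMod p) ℂ :=
  chi p ((2 : ZMod p)⁻¹ * x * z) • (Xop p ^ x.val * Zop p ^ z.val)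

/-- The stabilizer MUB vector `|ψ_B^V⟩ = p^{-1/2} Σ_k ω^{2⁻¹ B k² - V k} |k⟩`. -/
def psi (p : ℕ) (B V : ZMod p) : ZMod p → ℂ :=
  fun k => ((Real.sqrt p : ℂ))⁻¹ * chi p ((2 : ZMod p)⁻¹ * B * k ^ 2 - V * k)

/-- The magic state `|f_{a,b,c}⟩ = p^{-1/2} Σ_k ω^{a k³ + b k² + c k} |k⟩`. -/
def magic (p : ℕ) (a b c : ZMod p) : ZMod p → ℂ :=
  fun k => ((Real.sqrt p : ℂ))⁻¹ * chi p (a * k ^ 3 + b * k ^ 2 + c * k)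

/-- Rank-one projector `|v⟩⟨v|`. -/
def proj (p : ℕ) (v : ZMod p → ℂ) : Matrix (ZMod p) (ZMod p) ℂ :=
  fun i j => v i * (starRingEnd ℂ) (v j)

/-- The single-qudit operator `S = Σ_B |ψ_B^{-B(B+2⁻¹)}⟩⟨ψ_B^{-B(B+2⁻¹)}|`. -/
def Sop (p : ℕ) [NeZero p] : Matrix (ZMod p) (ZMod p) ℂ :=
  ∑ B : ZMod p, proj p (psi p B (-B * (B + (2 : ZMod p)⁻¹)))

/-! Shifting the cubic phase `a k³` by `x = -b/(3a)` creates the quadratic term `b k²`, and the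
clock part `Z^z` of the displacement adjusts the linear term to `c k`; what is left is a
`k`-independent root of unity. -/

lemma chi_eq_stdAddChar (p : ℕ) [NeZero p] (a : ZMod p) : chi p a = ZMod.stdAddChar a := by
  rw [ZMod.stdAddChar_apply, ZMod.toCircle_apply, chi]

lemma chi_add (p : ℕ) [NeZero p] (a b : ZMod p) : chi p (a + b) = chi p a * chi p b := by
  simp only [chi_eq_stdAddChar, AddChar.map_add_eq_mul]

lemma chi_pow_val (p : ℕ) [NeZero p] (a b : ZMod p) : chi p b ^ a.val = chi p (a * b) := by
  rw [chi_eq_stdAddChar, chi_eq_stdAddChar, ← AddChar.map_nsmul_eq_pow, nsmul_eq_mul,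
    ZMod.natCast_val, ZMod.cast_id', id]

lemma norm_chi (p : ℕ) [NeZero p] (a : ZMod p) : ‖chi p a‖ = 1 := by
  rw [chi_eq_stdAddChar, ZMod.stdAddChar_apply, Circle.norm_coe]

lemma Xop_mulVec (p : ℕ) [NeZero p] (v : ZMod p → ℂ) : Xop p *ᵥ v = fun j => v (j - 1) := by
  funext j
  simp only [mulVec, dotProduct, Xop, ite_mul, one_mul, zero_mul, ← sub_eq_iff_eq_add,
    Finset.sum_ite_eq, Finset.mem_univ, if_true]

lemma Xop_pow_mulVec (p : ℕ) [NeZero p] (m : ℕ) (v : ZMod p → ℂ) :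
    Xop p ^ m *ᵥ v = fun j => v (j - m) := by
  induction m with
  | zero => simp
  | succ m ih =>
    rw [pow_succ', ← mulVec_mulVec, ih, Xop_mulVec]
    funext j
    push_cast
    ring_nf

lemma Zop_pow_mulVec (p : ℕ) [NeZero p] (n : ℕ) (v : ZMod p → ℂ) :
    Zop p ^ n *ᵥ v = fun j => chi p j ^ n * v j := by
  funext j
  rw [Zop, diagonal_pow, mulVec_diagonal]
  rfl

lemma Dop_mulVec_apply (p : ℕ) [NeZero p] (x z : ZMod p) (v : ZMod p → ℂ) (j : ZMod p) :
    (Dop p x z *ᵥ v) j = chi p (2⁻¹ * x * z) * chi p (z * (j - x)) * v (j - x) := by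
  rw [Dop, smul_mulVec, ← mulVec_mulVec, Xop_pow_mulVec, Zop_pow_mulVec]
  simp only [Pi.smul_apply, smul_eq_mul, ZMod.natCast_val, ZMod.cast_id', id, chi_pow_val,
    mul_assoc]

lemma cubic_sub_add_linear {R : Type*} [CommRing R] {a b c x z : R} (hx : 3 * a * x = -b)
    (hz : z + 3 * a * x ^ 2 = c) (j : R) :
    a * (j - x) ^ 3 + z * (j - x) = a * j ^ 3 + b * j ^ 2 + c * j - (a * x ^ 3 + z * x) := by
  linear_combination (-j ^ 2) * hx + j * hz

theorem stmt19 (p : ℕ) [Fact p.Prime] (hp3 : 3 < p) (a b c : ZMod p) (ha : a ≠ 0) :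
    ∃ γ : ℂ, ‖γ‖ = 1 ∧
      Dop p (-b * (3 * a)⁻¹) (c - b ^ 2 * (3 * a)⁻¹) *ᵥ magic p a 0 0
        = γ • magic p a b c := by
  set x := -b * (3 * a)⁻¹
  set z := c - b ^ 2 * (3 * a)⁻¹
  have h3 : (3 : ZMod p) ≠ 0 := fun h3 => by
    have hdvd : p ∣ 3 := (ZMod.natCast_eq_zero_iff 3 p).mp (by exact_mod_cast h3)
    have := Nat.le_of_dvd (by norm_num) hdvd
    omega
  have hx : 3 * a * x = -b := by simp only [x]; field_simp
  have hz : z + 3 * a * x ^ 2 = c := by simp only [x, z]; field_simp; ring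
  refine ⟨chi p (2⁻¹ * x * z - (a * x ^ 3 + z * x)), norm_chi p _, funext fun j => ?_⟩
  have hphase : chi p (2⁻¹ * x * z) * chi p (z * (j - x)) * chi p (a * (j - x) ^ 3)
      = chi p (2⁻¹ * x * z - (a * x ^ 3 + z * x)) * chi p (a * j ^ 3 + b * j ^ 2 + c * j) := by
    rw [← chi_add, ← chi_add, ← chi_add]
    congr 1
    linear_combination cubic_sub_add_linear hx hz j
  simp only [Dop_mulVec_apply, magic, Pi.smul_apply, smul_eq_mul, zero_mul, add_zero]
  linear_combination (Real.sqrt p : ℂ)⁻¹ * hphase
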